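/- Let A be a feasible tree solution and F a feasible solution with V[A]=V[F]. If e,f ∈ A are compatible w.r.t. F and f,g ∈ A are compatible w.r.t. F, then e and g are compatible w.r.t. F. In particular, the compatibility relation ~cp is an equivalence relation on the edges of A. -/

import Mathlib

open Finset

attribute [local instance] Classical.propDecidable

variable {V : Type*} [Fintype V] [DecidableEq V]

/-- The simple graph on `V` induced by a finite set of (undirected) edges. -/
def graphOf (F : Finset (Sym2 V)) : SimpleGraph V where
  Adj u v := u ≠ v ∧ s(u, v) ∈ F
  symm := by
    constructor
    intro u v h
    refine ⟨Ne.symm h.1, ?_⟩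
    rw [Sym2.eq_swap]
    exact h.2
  loopless := by constructor; intro v h; exact h.1 rfl

/-- The set of vertices incident to at least one edge of `F` (denoted `V[F]` in the paper). -/
def supp (F : Finset (Sym2 V)) : Set V := {v | ∃ e ∈ F, v ∈ e}

/-- A Steiner forest `F` is feasible for the terminal pairs `T` if it connects every pair. -/
def Feasible (F : Finset (Sym2 V)) (T : Finset (V × V)) : Prop :=
  ∀ p ∈ T, (graphOf F).Reachable p.1 p.2

/-- Total edge cost `d(F)`. -/
def cost (d : Sym2 V → ℝ) (F : Finset (Sym2 V)) : ℝ := ∑ e ∈ F, d e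

/-- `A` is a tree (on its vertex support): loopless edges, acyclic, connected on `V[A]`. -/
def IsTreeSol (A : Finset (Sym2 V)) : Prop :=
  (∀ e ∈ A, ¬ e.IsDiag) ∧ (graphOf A).IsAcyclic ∧
    ∀ u ∈ supp A, ∀ v ∈ supp A, (graphOf A).Reachable u v

/-- Shortest-path distance between `u` and `v` in the graph with edge set `Eall`
and edge lengths `d`. -/
noncomputable def wdist (Eall : Finset (Sym2 V)) (d : Sym2 V → ℝ) (u v : V) : ℝ :=
  ⨅ p : (graphOf Eall).Walk u v, (p.edges.map d).sum

/-- Width of a vertex set `W`: the largest shortest-path distance of a terminal pair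
whose two members both lie in `W`. -/
noncomputable def widthSet (Eall : Finset (Sym2 V)) (d : Sym2 V → ℝ) (T : Finset (V × V))
    (W : Set V) : ℝ :=
  sSup {x : ℝ | ∃ p ∈ T, p.1 ∈ W ∧ p.2 ∈ W ∧ x = wdist Eall d p.1 p.2}

/-- Total width `w(F)`: the sum of the widths of the connected components of `F`. -/
noncomputable def totalWidth (Eall : Finset (Sym2 V)) (d : Sym2 V → ℝ) (T : Finset (V × V))
    (F : Finset (Sym2 V)) : ℝ :=
  ∑ᶠ c : (graphOf F).ConnectedComponent, widthSet Eall d T c.supp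

/-- The potential `φ(F) = d(F) + w(F)`. -/
noncomputable def phi (Eall : Finset (Sym2 V)) (d : Sym2 V → ℝ) (T : Finset (V × V))
    (F : Finset (Sym2 V)) : ℝ :=
  cost d F + totalWidth Eall d T F

/-- Some edge of `F` leaves the vertex set `W`. -/
def leavesSet (F : Finset (Sym2 V)) (W : Set V) : Prop :=
  ∃ g ∈ F, ∃ x y : V, g = s(x, y) ∧ x ∈ W ∧ y ∉ W

/-- `T_{e,f}`: the connected component of `A ∖ {e,f}` containing the interior of the
unique `e`–`f` path of the tree `A`; equivalently, the component containing an endpoint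
of `e` together with an endpoint of `f`. -/
def midComp (A : Finset (Sym2 V)) (e f : Sym2 V) : Set V :=
  {v | ∃ x ∈ e, ∃ y ∈ f,
    (graphOf (A \ {e, f})).Reachable x y ∧ (graphOf (A \ {e, f})).Reachable x v}

/-- `e` and `f` are compatible w.r.t. `F` (`e ~cp f`). -/
def Compatible (A F : Finset (Sym2 V)) (e f : Sym2 V) : Prop :=
  e = f ∨ ¬ leavesSet F (midComp A e f)

/-- `e` is safe: some `F`-edge crosses between the two components of `A ∖ {e}`. -/
def Safe (A F : Finset (Sym2 V)) (e : Sym2 V) : Prop :=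
  ∃ g ∈ F, ∃ x y : V, g = s(x, y) ∧ x ≠ y ∧ ¬ (graphOf (A.erase e)).Reachable x y

/-- `e` is essential: removing it from `A` destroys feasibility. -/
def Essential (A : Finset (Sym2 V)) (T : Finset (V × V)) (e : Sym2 V) : Prop :=
  ¬ Feasible (A.erase e) T

/-- The compatibility class of the edge `e` of `A`. -/
noncomputable def cls (A F : Finset (Sym2 V)) (e : Sym2 V) : Finset (Sym2 V) :=
  A.filter (fun f => Compatible A F e f)

/-- `S_u`: the set of unsafe edges of `A`. -/
noncomputable def unsafeCls (A F : Finset (Sym2 V)) : Finset (Sym2 V) :=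
  A.filter (fun e => ¬ Safe A F e)

/-- `𝔖`: the set of compatibility classes of edges of `A`. -/
noncomputable def classes (A F : Finset (Sym2 V)) : Finset (Finset (Sym2 V)) :=
  A.image (cls A F)

/-- `e` lies on the fundamental cycle closed by adding the edge `f` to the tree `A`. -/
def onFundCycle (A : Finset (Sym2 V)) (f e : Sym2 V) : Prop :=
  e ∈ A ∧ ∀ x y : V, f = s(x, y) →
    (graphOf A).Reachable x y ∧ ¬ (graphOf (A.erase e)).Reachable x y

/-- Edge/edge swap optimality of `A` w.r.t. added edges from `Eadd` and objective `obj`: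
no swap that adds an edge `f ∈ Eadd` and removes one edge of the cycle it closes,
keeping feasibility, strictly decreases the objective. -/
def EdgeEdgeSwapOptimal (Eadd : Finset (Sym2 V)) (T : Finset (V × V))
    (obj : Finset (Sym2 V) → ℝ) (A : Finset (Sym2 V)) : Prop :=
  ∀ f ∈ Eadd, ∀ e, onFundCycle A f e →
    Feasible (A.erase e ∪ {f}) T → obj A ≤ obj (A.erase e ∪ {f})

/-- Edge/set swap optimality of `A` w.r.t. added edges from `Eadd` and objective `obj`:
no swap that adds an edge `f ∈ Eadd` and removes a set `S` of edges of the cycle it closes,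
keeping feasibility, strictly decreases the objective. -/
def EdgeSetSwapOptimal (Eadd : Finset (Sym2 V)) (T : Finset (V × V))
    (obj : Finset (Sym2 V) → ℝ) (A : Finset (Sym2 V)) : Prop :=
  ∀ f ∈ Eadd, ∀ S ⊆ A, (∀ e ∈ S, onFundCycle A f e) →
    Feasible ((A \ S) ∪ {f}) T → obj A ≤ obj ((A \ S) ∪ {f})

/-- Removing swap optimality: deleting any (feasibility preserving) edge set from `A`
does not strictly decrease the objective. -/
def RemovingSwapOptimal (T : Finset (V × V))
    (obj : Finset (Sym2 V) → ℝ) (A : Finset (Sym2 V)) : Prop :=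
  ∀ S ⊆ A, Feasible (A \ S) T → obj A ≤ obj (A \ S)

/-- Path/set swap optimality of `A`: for vertices `u, v` in the same component of `A`,
adding a set `P ⊆ Eadd` of edges (along a `u`–`v` connection) and removing a set `S` of
edges of the component of `u`, in a way that keeps `u,v` connected and the solution
feasible, does not strictly decrease the objective. -/
def PathSetSwapOptimal (Eadd : Finset (Sym2 V)) (T : Finset (V × V))
    (obj : Finset (Sym2 V) → ℝ) (A : Finset (Sym2 V)) : Prop :=
  ∀ u v : V, (graphOf A).Reachable u v →
    ∀ P : Finset (Sym2 V), P ⊆ Eadd → ∀ S ⊆ A,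
      (∀ e ∈ S, ∃ x ∈ e, (graphOf A).Reachable u x) →
      (graphOf ((A \ S) ∪ P)).Reachable u v →
      Feasible ((A \ S) ∪ P) T → obj A ≤ obj ((A \ S) ∪ P)

/-- A connected component `c` of `A ∖ S` is an *inner* component for the class `S`
if it touches (at least) two distinct edges of `S`. -/
def innerComp (A S : Finset (Sym2 V)) (c : (graphOf (A \ S)).ConnectedComponent) : Prop :=
  ∃ e ∈ S, ∃ e' ∈ S, e ≠ e' ∧ (∃ x ∈ e, (graphOf (A \ S)).connectedComponentMk x = c) ∧
    ∃ y ∈ e', (graphOf (A \ S)).connectedComponentMk y = c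

/-- The sum of the widths of the inner components `E_{S,i}`, `i ∈ In_S`, of the class `S`. -/
noncomputable def innerWidthSum (Eall : Finset (Sym2 V)) (d : Sym2 V → ℝ) (T : Finset (V × V))
    (A S : Finset (Sym2 V)) : ℝ :=
  ∑ᶠ c : (graphOf (A \ S)).ConnectedComponent,
    if innerComp A S c then widthSet Eall d T c.supp else 0

/-- `index(E')` for a vertex set `W`: the largest index `i` (in the enumeration `tp` of the
terminal pairs by nondecreasing distance) of a terminal pair lying entirely inside `W`. -/
noncomputable def idxOf {nt : ℕ} (tp : Fin nt → V × V) (W : Set V) : ℕ :=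
  sSup {i : ℕ | ∃ h : i < nt, (tp ⟨i, h⟩).1 ∈ W ∧ (tp ⟨i, h⟩).2 ∈ W}

/-- The finite vertex support of an edge set. -/
def suppF (B : Finset (Sym2 V)) : Finset V :=
  Finset.univ.filter (fun v => ∃ e ∈ B, v ∈ e)

/-- `e` crosses between two different connected components of `A`. -/
def crossingEdge (A : Finset (Sym2 V)) (e : Sym2 V) : Prop :=
  ∀ x y : V, e = s(x, y) → ¬ (graphOf A).Reachable x y

/-- The components of `A` touched by the edge set `B`, i.e. the nodes of `G_A`
incident to `B`. -/
noncomputable def touched (A B : Finset (Sym2 V)) :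
    Finset ((graphOf A).ConnectedComponent) :=
  (suppF B).image ((graphOf A).connectedComponentMk)

/-- `B` is (the edge set of) a tree in the contracted multigraph `G_A`: all its edges cross
between components of `A`, it is connected (through the components of `A` it touches), and
it has one edge less than the number of components it touches. -/
def IsGATree (A B : Finset (Sym2 V)) : Prop :=
  (∀ e ∈ B, crossingEdge A e) ∧ (touched A B).card = B.card + 1 ∧
    ∀ x ∈ suppF B, ∀ y ∈ suppF B, (graphOf (A ∪ B)).Reachable x y

/-- `A` is `c`-approximate connecting move optimal: for every tree `B` in `G_A` (with edges
taken from `Emoves`), the total width of the components it connects, minus the largest of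
these widths, is at most `c` times the length of the tree. -/
def ConnApproxOptimal (Emoves Eall : Finset (Sym2 V)) (d : Sym2 V → ℝ) (T : Finset (V × V))
    (c : ℝ) (A : Finset (Sym2 V)) : Prop :=
  ∀ B ⊆ Emoves, IsGATree A B →
    (∑ t ∈ touched A B, widthSet Eall d T t.supp)
      - (⨆ t ∈ touched A B, widthSet Eall d T t.supp) ≤ c * ∑ e ∈ B, d e


/-!
For a vertex set `W`, call the edges with exactly one endpoint in `W` its cut; the cut of
`W ∆ W'` is the symmetric difference of the cuts. In the tree `A` the cut of `T_{e,f}` is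
`{e, f}`, so `T_{e,f} ∆ T_{f,g} ∆ T_{e,g}` has an empty `A`-cut and is therefore constant on the
connected vertex set `V[A] = V[F]`; in particular `F` does not leave it. Since the sets that `F`
does not leave are closed under symmetric difference, `T_{e,g}` inherits this property from
`T_{e,f}` and `T_{f,g}`.
-/

set_option linter.unusedSectionVars false

open scoped symmDiff

theorem Finset.sdiff_pair_eq_erase_erase {α : Type*} [DecidableEq α] (s : Finset α) (a b : α) :
    s \ {a, b} = (s.erase a).erase b := by
  rw [Finset.sdiff_insert, Finset.sdiff_singleton_eq_erase, Finset.erase_right_comm]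

theorem Set.mem_symmDiff_iff_mem_symmDiff {α : Type*} {s t : Set α} {u v : α} :
    (u ∈ s ∆ t ↔ v ∈ s ∆ t) ↔ ((u ∈ s ↔ v ∈ s) ↔ (u ∈ t ↔ v ∈ t)) := by
  simp only [Set.mem_symmDiff]
  tauto

section CutsOfEdgeSets

variable {F : Finset (Sym2 V)} {W W' : Set V}

theorem not_leavesSet_iff :
    ¬ leavesSet F W ↔ ∀ x y, s(x, y) ∈ F → (x ∈ W ↔ y ∈ W) := by
  constructor
  · intro h x y hxy
    refine ⟨fun hx => ?_, fun hy => ?_⟩ <;> by_contra hout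
    · exact h ⟨_, hxy, x, y, rfl, hx, hout⟩
    · exact h ⟨_, hxy, y, x, Sym2.eq_swap, hy, hout⟩
  · rintro h ⟨_, hg, x, y, rfl, hx, hy⟩
    exact hy ((h x y hg).mp hx)

theorem not_leavesSet_symmDiff (hW : ¬ leavesSet F W) (hW' : ¬ leavesSet F W') :
    ¬ leavesSet F (W ∆ W') := by
  rw [not_leavesSet_iff] at *
  intro x y hxy
  exact Set.mem_symmDiff_iff_mem_symmDiff.mpr (iff_of_true (hW x y hxy) (hW' x y hxy))

theorem not_leavesSet_of_forall_iff (h : ∀ x ∈ supp F, ∀ y ∈ supp F, (x ∈ W ↔ y ∈ W)) :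
    ¬ leavesSet F W := by
  rintro ⟨_, hg, x, y, rfl, hx, hy⟩
  exact hy ((h x ⟨_, hg, Sym2.mem_mk_left x y⟩ y ⟨_, hg, Sym2.mem_mk_right x y⟩).mp hx)

end CutsOfEdgeSets

theorem SimpleGraph.Reachable.mem_iff_of_forall_adj {α : Type*} {G : SimpleGraph α} {W : Set α}
    (hW : ∀ u v, G.Adj u v → (u ∈ W ↔ v ∈ W)) {u v : α} (huv : G.Reachable u v) :
    u ∈ W ↔ v ∈ W := by
  obtain ⟨p⟩ := huv
  induction p with
  | nil => rfl
  | cons hadj _ ih => exact (hW _ _ hadj).trans ih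

section GraphOf

variable {A B : Finset (Sym2 V)}

theorem graphOf_mono (h : B ⊆ A) : graphOf B ≤ graphOf A :=
  fun _ _ huv => ⟨huv.1, h huv.2⟩

theorem graphOf_erase (h : Sym2 V) : graphOf (A.erase h) = (graphOf A).deleteEdges {h} := by
  ext u v
  simp only [graphOf, SimpleGraph.deleteEdges_adj, Finset.mem_erase, Set.mem_singleton_iff]
  tauto

theorem graphOf_sdiff_pair_le (e f : Sym2 V) : graphOf (A \ {e, f}) ≤ graphOf (A.erase e) :=
  graphOf_mono (A.sdiff_pair_eq_erase_erase e f ▸ Finset.erase_subset _ _)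

theorem reachable_of_mem_of_mem {h : Sym2 V} (hA : h ∈ A) {x y : V} (hx : x ∈ h) (hy : y ∈ h) :
    (graphOf A).Reachable x y := by
  by_cases hxy : x = y
  · exact hxy ▸ .rfl
  · have hadj : (graphOf A).Adj x y := ⟨hxy, (Sym2.mem_and_mem_iff hxy).mp ⟨hx, hy⟩ ▸ hA⟩
    exact hadj.reachable

theorem not_reachable_erase_of_isAcyclic (hA : (graphOf A).IsAcyclic) {a b : V}
    (hab : s(a, b) ∈ A) (hne : a ≠ b) : ¬ (graphOf (A.erase s(a, b))).Reachable a b := by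
  rw [graphOf_erase, ← SimpleGraph.isBridge_iff]
  exact SimpleGraph.isAcyclic_iff_forall_adj_isBridge.mp hA ⟨hne, hab⟩

/-- A walk to an endpoint of `h` can be cut at its first endpoint of `h`. -/
theorem exists_mem_reachable_erase {h : Sym2 V} {u w : V} (hw : w ∈ h)
    (huw : (graphOf A).Reachable u w) : ∃ w' ∈ h, (graphOf (A.erase h)).Reachable u w' := by
  obtain ⟨p⟩ := huw
  induction p with
  | nil => exact ⟨_, hw, .rfl⟩
  | @cons u x _ hadj _ ih =>
    obtain ⟨w', hw', hxw'⟩ := ih hw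
    by_cases hux : s(u, x) = h
    · exact ⟨u, hux ▸ Sym2.mem_mk_left u x, .rfl⟩
    · have hadj' : (graphOf (A.erase h)).Adj u x := ⟨hadj.1, Finset.mem_erase.mpr ⟨hux, hadj.2⟩⟩
      exact ⟨w', hw', hadj'.reachable.trans hxw'⟩

end GraphOf

section MidComp

variable {A : Finset (Sym2 V)} {e f : Sym2 V}

theorem midComp_comm (e f : Sym2 V) : midComp A e f = midComp A f e := by
  ext v
  simp only [midComp, Finset.pair_comm e f]
  constructor <;>
  · rintro ⟨x, hx, y, hy, hxy, hxv⟩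
    exact ⟨y, hy, x, hx, hxy.symm, hxy.symm.trans hxv⟩

theorem mem_midComp_of_reachable {v w : V} (hv : v ∈ midComp A e f)
    (hvw : (graphOf (A \ {e, f})).Reachable v w) : w ∈ midComp A e f :=
  let ⟨x, hx, y, hy, hxy, hxv⟩ := hv
  ⟨x, hx, y, hy, hxy, hxv.trans hvw⟩

/-- Distinct `x₁, x₂` would close a cycle through `e`. -/
theorem eq_of_reachable_sdiff_pair (hA : (graphOf A).IsAcyclic) (he : e ∈ A) (hf : f ∈ A)
    (hef : e ≠ f) {x₁ x₂ y₁ y₂ : V} (hx₁ : x₁ ∈ e) (hx₂ : x₂ ∈ e) (hy₁ : y₁ ∈ f) (hy₂ : y₂ ∈ f)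
    (h₁ : (graphOf (A \ {e, f})).Reachable x₁ y₁) (h₂ : (graphOf (A \ {e, f})).Reachable x₂ y₂) :
    x₁ = x₂ := by
  by_contra hne
  obtain rfl : e = s(x₁, x₂) := (Sym2.mem_and_mem_iff hne).mp ⟨hx₁, hx₂⟩
  have hy : (graphOf (A.erase s(x₁, x₂))).Reachable y₁ y₂ :=
    reachable_of_mem_of_mem (Finset.mem_erase.mpr ⟨hef.symm, hf⟩) hy₁ hy₂
  exact not_reachable_erase_of_isAcyclic hA he hne
    (((h₁.mono (graphOf_sdiff_pair_le _ _)).trans hy).trans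
      (h₂.mono (graphOf_sdiff_pair_le _ _)).symm)

theorem exists_mem_midComp (hA : IsTreeSol A) (he : e ∈ A) (hf : f ∈ A) :
    ∃ x ∈ e, x ∈ midComp A e f := by
  have ha := Sym2.out_fst_mem e
  have hc := Sym2.out_fst_mem f
  obtain ⟨x, hx, hcx⟩ := exists_mem_reachable_erase ha
    (hA.2.2 _ ⟨f, hf, hc⟩ _ ⟨e, he, ha⟩)
  obtain ⟨y, hy, hxy⟩ := exists_mem_reachable_erase hc hcx.symm
  rw [← Finset.sdiff_pair_eq_erase_erase] at hxy
  exact ⟨x, hx, x, hx, y, hy, hxy, .rfl⟩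

theorem midComp_separates_endpoints (hA : IsTreeSol A) (he : e ∈ A) (hf : f ∈ A) (hef : e ≠ f)
    {a b : V} (ha : a ∈ e) (hb : b ∈ e) (hab : a ≠ b) :
    ¬ (a ∈ midComp A e f ↔ b ∈ midComp A e f) := by
  obtain ⟨x, hx, hxT⟩ := exists_mem_midComp hA he hf
  have not_both : ¬ (a ∈ midComp A e f ∧ b ∈ midComp A e f) := by
    rintro ⟨⟨x₁, hx₁, y₁, hy₁, h₁, hx₁a⟩, ⟨x₂, hx₂, y₂, hy₂, h₂, hx₂b⟩⟩
    obtain rfl := eq_of_reachable_sdiff_pair hA.2.1 he hf hef hx₁ hx₂ hy₁ hy₂ h₁ h₂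
    obtain rfl : e = s(a, b) := (Sym2.mem_and_mem_iff hab).mp ⟨ha, hb⟩
    exact not_reachable_erase_of_isAcyclic hA.2.1 he hab
      ((hx₁a.symm.trans hx₂b).mono (graphOf_sdiff_pair_le _ _))
  rw [(Sym2.mem_and_mem_iff hab).mp ⟨ha, hb⟩, Sym2.mem_iff] at hx
  obtain rfl | rfl := hx <;> tauto

theorem mem_midComp_iff_of_adj (hA : IsTreeSol A) (he : e ∈ A) (hf : f ∈ A) (hef : e ≠ f)
    {u v : V} (huv : (graphOf A).Adj u v) :
    (u ∈ midComp A e f ↔ v ∈ midComp A e f) ↔ s(u, v) ≠ e ∧ s(u, v) ≠ f := by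
  obtain ⟨hne, hmem⟩ := huv
  by_cases hue : s(u, v) = e
  · subst hue
    simpa using midComp_separates_endpoints hA he hf hef (Sym2.mem_mk_left u v)
      (Sym2.mem_mk_right u v) hne
  by_cases huf : s(u, v) = f
  · subst huf
    rw [midComp_comm]
    simpa using midComp_separates_endpoints hA hf he (Ne.symm hef) (Sym2.mem_mk_left u v)
      (Sym2.mem_mk_right u v) hne
  have hadj : (graphOf (A \ {e, f})).Adj u v := by
    refine ⟨hne, Finset.mem_sdiff.mpr ⟨hmem, ?_⟩⟩
    simp [hue, huf]
  exact iff_of_true ⟨fun hu => mem_midComp_of_reachable hu hadj.reachable,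
    fun hv => mem_midComp_of_reachable hv hadj.reachable.symm⟩ ⟨hue, huf⟩

end MidComp

section Compatible

variable {A F : Finset (Sym2 V)} {e f g : Sym2 V}

theorem mem_symmDiff_midComp_iff_of_mem_supp (hA : IsTreeSol A)
    (he : e ∈ A) (hf : f ∈ A) (hg : g ∈ A) (hef : e ≠ f) (hfg : f ≠ g) (heg : e ≠ g)
    {u v : V} (hu : u ∈ supp A) (hv : v ∈ supp A) :
    u ∈ midComp A e f ∆ midComp A f g ∆ midComp A e g ↔
      v ∈ midComp A e f ∆ midComp A f g ∆ midComp A e g := by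
  refine (hA.2.2 u hu v hv).mem_iff_of_forall_adj fun x y hxy => ?_
  rw [Set.mem_symmDiff_iff_mem_symmDiff, Set.mem_symmDiff_iff_mem_symmDiff,
    mem_midComp_iff_of_adj hA he hf hef hxy, mem_midComp_iff_of_adj hA hf hg hfg hxy,
    mem_midComp_iff_of_adj hA he hg heg hxy]
  grind

theorem Compatible.symm (h : Compatible A F e f) : Compatible A F f e :=
  h.imp Eq.symm (midComp_comm (A := A) e f ▸ ·)

theorem Compatible.trans (hA : IsTreeSol A) (hsupp : supp A = supp F)
    (he : e ∈ A) (hf : f ∈ A) (hg : g ∈ A)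
    (hef : Compatible A F e f) (hfg : Compatible A F f g) : Compatible A F e g := by
  rcases eq_or_ne e f with rfl | hne_ef
  · exact hfg
  rcases eq_or_ne f g with rfl | hne_fg
  · exact hef
  rcases eq_or_ne e g with heg | hne_eg
  · exact Or.inl heg
  have hconst : ¬ leavesSet F (midComp A e f ∆ midComp A f g ∆ midComp A e g) :=
    not_leavesSet_of_forall_iff fun u hu v hv =>
      mem_symmDiff_midComp_iff_of_mem_supp hA he hf hg hne_ef hne_fg hne_eg
        (hsupp ▸ hu) (hsupp ▸ hv)
  have h := not_leavesSet_symmDiff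
    (not_leavesSet_symmDiff (hef.resolve_left hne_ef) (hfg.resolve_left hne_fg)) hconst
  rw [symmDiff_symmDiff_cancel_left] at h
  exact Or.inr h

end Compatible

theorem stmt3_compatible_trans_general
    (A F : Finset (Sym2 V))
    (hAtree : IsTreeSol A) (hsupp : supp A = supp F)
    (e f g : Sym2 V) (he : e ∈ A) (hf : f ∈ A) (hg : g ∈ A)
    (hef : Compatible A F e f) (hfg : Compatible A F f g) :
    Compatible A F e g ∧
      Equivalence (fun e₁ e₂ : {x : Sym2 V // x ∈ A} => Compatible A F e₁.1 e₂.1) :=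
  ⟨hef.trans hAtree hsupp he hf hg hfg,
    ⟨fun _ => Or.inl rfl, Compatible.symm,
      fun {a b c} h₁₂ h₂₃ => h₁₂.trans hAtree hsupp a.2 b.2 c.2 h₂₃⟩⟩

theorem stmt3_compatible_trans
    (T : Finset (V × V)) (A F : Finset (Sym2 V))
    (hAfeas : Feasible A T) (hFfeas : Feasible F T)
    (hAtree : IsTreeSol A) (hsupp : supp A = supp F)
    (e f g : Sym2 V) (he : e ∈ A) (hf : f ∈ A) (hg : g ∈ A)
    (hef : Compatible A F e f) (hfg : Compatible A F f g) :
    Compatible A F e g ∧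
      Equivalence (fun e₁ e₂ : {x : Sym2 V // x ∈ A} => Compatible A F e₁.1 e₂.1) :=
  stmt3_compatible_trans_general A F hAtree hsupp e f g he hf hg hef hfg
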